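/- arXiv:1404.4429 — 2 statements merged into one kernel-verified Lean document; each statement's English description precedes it below -/
import Mathlib

section
/- For the Legendre polynomials L_j and α > 0, define L̂^α_{L,j}(x) = (1/Γ(α)) ∫_{-1}^x (x−s)^{α−1} L_j(s) ds. Then for all j ≥ 1, the three-term recurrence (j+1+α) L̂^α_{L,j+1}(x) = (2j+1) x L̂^α_{L,j}(x) − (j−α) L̂^α_{L,j−1}(x) holds for x ∈ (−1,1]. -/
open MeasureTheory intervalIntegral

/-- The Legendre polynomials via the three-term recurrence. -/
noncomputable def legendreP : ℕ → ℝ → ℝ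
  | 0 => fun _ => 1
  | 1 => fun x => x
  | (j + 2) => fun x =>
      ((2 * (j : ℝ) + 3) * x * legendreP (j + 1) x - ((j : ℝ) + 1) * legendreP j x) / ((j : ℝ) + 2)

open Polynomial

noncomputable def legP : ℕ → Polynomial ℝ
  | 0 => 1
  | 1 => X
  | (j+2) => C (((j:ℝ)+2)⁻¹) * (C (2*(j:ℝ)+3) * X * legP (j+1) - C ((j:ℝ)+1) * legP j)

lemma legP_rec (j : ℕ) :
    C ((j:ℝ)+2) * legP (j+2) = C (2*(j:ℝ)+3) * X * legP (j+1) - C ((j:ℝ)+1) * legP j := by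
  have h : ((j:ℝ)+2) ≠ 0 := by positivity
  rw [show legP (j+2) = C (((j:ℝ)+2)⁻¹) *
      (C (2*(j:ℝ)+3) * X * legP (j+1) - C ((j:ℝ)+1) * legP j) from rfl,
    ← mul_assoc, ← C_mul, mul_inv_cancel₀ h, C_1, one_mul]

lemma legendreP_eq : ∀ (j : ℕ) (x : ℝ), legendreP j x = (legP j).eval x
  | 0, x => by simp [legendreP, show legP 0 = 1 from rfl]
  | 1, x => by simp [legendreP, show legP 1 = X from rfl]
  | (j+2), x => by
    have h1 := legendreP_eq (j+1) x
    have h0 := legendreP_eq j x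
    have h : ((j:ℝ)+2) ≠ 0 := by positivity
    have hrec := congrArg (eval x) (legP_rec j)
    simp only [eval_mul, eval_sub, eval_C, eval_X] at hrec
    show ((2 * (j : ℝ) + 3) * x * legendreP (j + 1) x - ((j : ℝ) + 1) * legendreP j x)
        / ((j : ℝ) + 2) = _
    rw [h1, h0, ← hrec]
    field_simp
lemma legendre_aux (n : ℕ) :
    derivative (legP (n+1)) = X * derivative (legP n) + C ((n:ℝ)+1) * legP n ∧
    X * derivative (legP (n+1)) = C ((n:ℝ)+1) * legP (n+1) + derivative (legP n) ∧
    (X^2 - 1) * derivative (legP (n+1)) = C ((n:ℝ)+1) * (X * legP (n+1) - legP n) := by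
  induction n with
  | zero =>
    refine ⟨?_, ?_, ?_⟩ <;>
      simp [show legP 1 = X from rfl, show legP 0 = 1 from rfl] <;> ring
  | succ n ih =>
    obtain ⟨hB, hC, hE⟩ := ih
    have hne : ((n:ℝ)+2) ≠ 0 := by positivity
    have hCne : (C ((n:ℝ)+2) : Polynomial ℝ) ≠ 0 := by
      simpa using Polynomial.C_ne_zero.mpr hne
    have hrec := legP_rec n
    have hrecd := congrArg derivative hrec
    simp only [derivative_mul, derivative_sub, derivative_add, derivative_C, derivative_X, zero_mul, zero_add, mul_one, mul_zero, add_zero, derivative_one] at hrecd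
    have hB' : derivative (legP (n+2)) = X * derivative (legP (n+1)) + C ((n:ℝ)+2) * legP (n+1) := by
      apply mul_left_cancel₀ hCne
      simp only [C_add, C_mul, map_ofNat, C_1] at hrecd hC ⊢
      linear_combination hrecd + (C (n:ℝ) + 1) * hC
    have hC' : X * derivative (legP (n+2)) = C ((n:ℝ)+2) * legP (n+2) + derivative (legP (n+1)) := by
      apply mul_left_cancel₀ hCne
      simp only [C_add, C_mul, map_ofNat, C_1] at hB' hrec hE ⊢
      linear_combination (C (n:ℝ) + 2) * X * hB' - (C (n:ℝ) + 2) * hrec + (C (n:ℝ) + 2) * hE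
    have hE' : (X^2 - 1) * derivative (legP (n+2)) = C ((n:ℝ)+2) * (X * legP (n+2) - legP (n+1)) := by
      apply mul_left_cancel₀ hCne
      simp only [C_add, C_mul, map_ofNat, C_1] at hB' hrec hE ⊢
      linear_combination (C (n:ℝ) + 2) * (X^2-1) * hB' - (C (n:ℝ) + 2) * X * hrec
        + (C (n:ℝ) + 2) * X * hE
    have hc : ((n+1:ℕ):ℝ) + 1 = (n:ℝ) + 2 := by push_cast; ring
    refine ⟨?_, ?_, ?_⟩ <;> rw [hc]
    · exact hB'
    · exact hC'
    · exact hE'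

lemma legP_derivative_rec (k : ℕ) :
    derivative (legP (k+2)) = C (2*(k:ℝ)+3) * legP (k+1) + derivative (legP k) := by
  obtain ⟨-, hC, -⟩ := legendre_aux k
  obtain ⟨hB', -, -⟩ := legendre_aux (k+1)
  have hc : ((k+1:ℕ):ℝ) + 1 = (k:ℝ) + 2 := by push_cast; ring
  rw [hc] at hB'
  simp only [C_add, C_mul, map_ofNat, C_1] at hB' hC ⊢
  linear_combination hB' + hC

lemma legP_eval_neg_one : ∀ m : ℕ, eval (-1) (legP m) = (-1)^m
  | 0 => by simp [show legP 0 = 1 from rfl]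
  | 1 => by simp [show legP 1 = X from rfl]
  | (m+2) => by
    have h1 := legP_eval_neg_one (m+1)
    have h0 := legP_eval_neg_one m
    have h := congrArg (eval (-1)) (legP_rec m)
    simp only [eval_mul, eval_sub, eval_C, eval_X, h1, h0] at h
    have hne : ((m:ℝ)+2) ≠ 0 := by positivity
    apply mul_left_cancel₀ hne
    rw [h, pow_succ, pow_succ, pow_succ]
    ring
lemma integrable_rpow_poly (x β : ℝ) (hβ : -1 < β) (p : Polynomial ℝ) :
    IntervalIntegrable (fun s => (x - s) ^ β * eval s p) volume (-1) x := by
  have h1 : IntervalIntegrable (fun s : ℝ => s ^ β) volume 0 (x + 1) :=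
    intervalIntegral.intervalIntegrable_rpow' hβ
  have h2 := h1.comp_sub_left x
  simp only [sub_zero] at h2
  rw [show x - (x+1) = -1 by ring] at h2
  exact h2.symm.mul_continuousOn (p.continuous_aeval.continuousOn)

lemma cont_rpow_shift (x α : ℝ) (hα : 0 < α) : Continuous fun s : ℝ => (x - s) ^ α := by
  rw [continuous_iff_continuousAt]
  intro s
  exact (Real.continuousAt_rpow_const _ _ (Or.inr hα.le)).comp (by fun_prop)

lemma ibp_aux (x α : ℝ) (hx : (-1:ℝ) < x) (hα : 0 < α) (p : Polynomial ℝ)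
    (hp : eval (-1) p = 0) :
    α * ∫ s in (-1:ℝ)..x, (x - s) ^ (α - 1) * eval s p
      = ∫ s in (-1:ℝ)..x, (x - s) ^ α * eval s (derivative p) := by
  set F : ℝ → ℝ := fun s => (x - s) ^ α * eval s p with hF
  set G : ℝ → ℝ := fun s => α * (x - s) ^ (α - 1) * (-1) * eval s p
      + (x - s) ^ α * eval s (derivative p) with hG
  have i1 : IntervalIntegrable (fun s => (x - s) ^ (α-1) * eval s p) volume (-1) x :=
    integrable_rpow_poly x (α-1) (by linarith) p
  have i2 : IntervalIntegrable (fun s => (x - s) ^ α * eval s (derivative p)) volume (-1) x :=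
    integrable_rpow_poly x α (by linarith) (derivative p)
  have hGeq : G = fun s => (-α) * ((x - s) ^ (α-1) * eval s p)
      + (x - s) ^ α * eval s (derivative p) := by
    funext s; simp only [hG]; ring
  have hint : IntervalIntegrable G volume (-1) x := by
    rw [hGeq]; exact (i1.const_mul (-α)).add i2
  have hcont : ContinuousOn F (Set.Icc (-1) x) :=
    ((cont_rpow_shift x α hα).mul p.continuous_aeval).continuousOn
  have hderiv : ∀ s ∈ Set.Ioo (-1:ℝ) x, HasDerivWithinAt F (G s) (Set.Ioi s) s := by
    intro s hs
    have hxs : 0 < x - s := by linarith [hs.2]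
    have h1 : HasDerivAt (fun s : ℝ => x - s) (-1) s := (hasDerivAt_id s).const_sub x
    have h2 : HasDerivAt (fun t : ℝ => t ^ α) (α * (x - s) ^ (α - 1)) (x - s) :=
      Real.hasDerivAt_rpow_const (Or.inl hxs.ne')
    have h3 : HasDerivAt (fun s : ℝ => (x - s) ^ α) (α * (x - s) ^ (α - 1) * (-1)) s :=
      h2.comp s h1
    have h4 : HasDerivAt (fun s : ℝ => eval s p) (eval s (derivative p)) s := p.hasDerivAt s
    exact (h3.mul h4).hasDerivWithinAt
  have hFTC := intervalIntegral.integral_eq_sub_of_hasDeriv_right_of_le hx.le hcont hderiv hint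
  have hFx : F x = 0 := by
    simp only [hF, sub_self, Real.zero_rpow hα.ne', zero_mul]
  have hFa : F (-1) = 0 := by simp only [hF, hp, mul_zero]
  rw [hFx, hFa, sub_zero, hGeq] at hFTC
  rw [intervalIntegral.integral_add (i1.const_mul (-α)) i2,
    intervalIntegral.integral_const_mul] at hFTC
  linarith

/-- Three-term recurrence for the left fractional integrals of the Legendre polynomials:
`(j+1+α) L̂^α_{L,j+1}(x) = (2j+1) x L̂^α_{L,j}(x) − (j−α) L̂^α_{L,j−1}(x)` for `j ≥ 1`. -/
theorem legendre_left_frac_integral_rec (α : ℝ) (hα : 0 < α) (j : ℕ) (hj : 1 ≤ j)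
    (x : ℝ) (hx : x ∈ Set.Ioc (-1 : ℝ) 1) :
    ((j : ℝ) + 1 + α) *
        ((1 / Real.Gamma α) * ∫ s in (-1 : ℝ)..x, (x - s) ^ (α - 1) * legendreP (j + 1) s)
      = (2 * (j : ℝ) + 1) * x *
          ((1 / Real.Gamma α) * ∫ s in (-1 : ℝ)..x, (x - s) ^ (α - 1) * legendreP j s)
        - ((j : ℝ) - α) *
          ((1 / Real.Gamma α) * ∫ s in (-1 : ℝ)..x, (x - s) ^ (α - 1) * legendreP (j - 1) s) := by
  obtain ⟨k, rfl⟩ : ∃ k, j = k + 1 := ⟨j - 1, (Nat.succ_pred_eq_of_pos hj).symm⟩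
  obtain ⟨hx1, -⟩ := hx
  simp only [Nat.add_sub_cancel, legendreP_eq, show k + 1 + 1 = k + 2 from rfl]
  push_cast
  have int1 : ∀ m : ℕ, IntervalIntegrable (fun s => (x - s) ^ (α-1) * eval s (legP m))
      volume (-1) x := fun m => integrable_rpow_poly x (α-1) (by linarith) _
  have int2 : ∀ m : ℕ, IntervalIntegrable (fun s => (x - s) ^ α * eval s (legP m))
      volume (-1) x := fun m => integrable_rpow_poly x α (by linarith) _
  set T : ℕ → ℝ := fun m => ∫ s in (-1:ℝ)..x, (x - s) ^ (α - 1) * eval s (legP m) with hT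
  set U : ℝ := ∫ s in (-1:ℝ)..x, (x - s) ^ α * eval s (legP (k+1)) with hU
  have step1 : (2*(k:ℝ)+3) * x * T (k+1)
      = ((k:ℝ)+2) * T (k+2) + ((k:ℝ)+1) * T k + (2*(k:ℝ)+3) * U := by
    have key : Set.EqOn (fun s => (2*(k:ℝ)+3) * x * ((x-s)^(α-1) * eval s (legP (k+1))))
        (fun s => (((k:ℝ)+2) * ((x-s)^(α-1) * eval s (legP (k+2)))
          + ((k:ℝ)+1) * ((x-s)^(α-1) * eval s (legP k)))
          + (2*(k:ℝ)+3) * ((x-s)^α * eval s (legP (k+1)))) (Set.uIcc (-1) x) := by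
      intro s hs
      rw [Set.uIcc_of_le (by linarith : (-1:ℝ) ≤ x)] at hs
      have hs' : s ≤ x := hs.2
      have hrec := congrArg (eval s) (legP_rec k)
      simp only [eval_mul, eval_sub, eval_C, eval_X] at hrec
      have hpow : (x - s) ^ α = (x - s) ^ (α-1) * (x - s) := by
        rcases eq_or_lt_of_le hs' with h | h
        · rw [h, sub_self, Real.zero_rpow hα.ne', mul_zero]
        · have h0 : x - s ≠ 0 := (by linarith : (0:ℝ) < x - s).ne'
          have := Real.rpow_add_one h0 (α - 1)
          rw [sub_add_cancel] at this
          exact this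
      simp only
      rw [hpow]
      linear_combination (-(x-s)^(α-1)) * hrec
    have iA := (int1 (k+2)).const_mul ((k:ℝ)+2)
    have iB := (int1 k).const_mul ((k:ℝ)+1)
    have iC := (int2 (k+1)).const_mul (2*(k:ℝ)+3)
    rw [hT]
    simp only
    rw [← intervalIntegral.integral_const_mul, intervalIntegral.integral_congr key,
      intervalIntegral.integral_add (iA.add iB) iC, intervalIntegral.integral_add iA iB,
      intervalIntegral.integral_const_mul, intervalIntegral.integral_const_mul,
      intervalIntegral.integral_const_mul]
  have step2 : α * T (k+2) - α * T k = (2*(k:ℝ)+3) * U := by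
    have hp : eval (-1) (legP (k+2) - legP k) = 0 := by
      rw [eval_sub, legP_eval_neg_one, legP_eval_neg_one, pow_succ, pow_succ]
      ring
    have hibp := ibp_aux x α hx1 hα (legP (k+2) - legP k) hp
    rw [derivative_sub, legP_derivative_rec k, add_sub_cancel_right] at hibp
    simp only [eval_sub, eval_mul, eval_C, mul_sub] at hibp
    have e2 : (fun s => (x - s) ^ α * ((2*(k:ℝ)+3) * eval s (legP (k+1))))
        = fun s => (2*(k:ℝ)+3) * ((x - s) ^ α * eval s (legP (k+1))) := by
      funext s; ring
    rw [intervalIntegral.integral_sub (int1 (k+2)) (int1 k)] at hibp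
    rw [show (fun s => (x - s) ^ α * ((2*(k:ℝ)+3) * eval s (legP (k+1)))) = _ from e2,
      intervalIntegral.integral_const_mul] at hibp
    rw [hT, hU]
    simp only
    linarith [hibp]
  linear_combination (1/Real.Gamma α) * step2 - (1/Real.Gamma α) * step1
end

section
/- For the Legendre polynomials L_j and α > 0, define L̂^α_{R,j}(x) = (1/Γ(α)) ∫_x^1 (s−x)^{α−1} L_j(s) ds. Then for all j ≥ 1, the three-term recurrence (j+1+α) L̂^α_{R,j+1}(x) = (2j+1) x L̂^α_{R,j}(x) − (j−α) L̂^α_{R,j−1}(x) holds for x ∈ [−1,1). -/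
open MeasureTheory intervalIntegral

/-!
Put `I_n = ∫_x^1 (s-x)^{α-1} L_n(s) ds` and compute `(2n+3) ∫_x^1 (s-x)^α L_{n+1}(s) ds` in two
ways. Writing `(s-x)^α = (s-x)^{α-1} (s-x)` and expanding `(2n+3) s L_{n+1}` by the recurrence gives
`(n+2) I_{n+2} + (n+1) I_n - (2n+3) x I_{n+1}`. On the other hand `(2n+3) L_{n+1}` is the derivative
of `L_{n+2} - L_n`, which vanishes at `1` since every `L_k(1) = 1`, while `(s-x)^α` vanishes at `x`;
so integrating by parts gives `-α (I_{n+2} - I_n)`. Comparing the two yields the recurrence.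
-/

open Polynomial

noncomputable def legendrePoly : ℕ → ℝ[X]
  | 0 => 1
  | 1 => X
  | n + 2 => C ((n + 2 : ℝ)⁻¹) *
      ((2 * (n : ℝ[X]) + 3) * X * legendrePoly (n + 1) - ((n : ℝ[X]) + 1) * legendrePoly n)

namespace legendrePoly

theorem eval_eq_legendreP (n : ℕ) (x : ℝ) : (legendrePoly n).eval x = legendreP n x := by
  induction n using legendrePoly.induct with
  | case1 | case2 => simp [legendrePoly, legendreP]
  | case3 n ih₀ ih₁ => simp [legendrePoly, legendreP, ih₀, ih₁, div_eq_inv_mul]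

theorem eval_one (n : ℕ) : (legendrePoly n).eval 1 = 1 := by
  induction n using legendrePoly.induct with
  | case1 | case2 => simp [legendrePoly]
  | case3 n ih₀ ih₁ =>
    simp [legendrePoly, ih₀, ih₁]
    field_simp
    ring

theorem recurrence (n : ℕ) :
    ((n : ℝ[X]) + 2) * legendrePoly (n + 2)
      = (2 * (n : ℝ[X]) + 3) * X * legendrePoly (n + 1) - ((n : ℝ[X]) + 1) * legendrePoly n := by
  have h : ((n : ℝ[X]) + 2) * C ((n + 2 : ℝ)⁻¹) = 1 := by
    rw [← map_natCast C, ← map_ofNat C 2, ← map_add, ← C_mul, mul_inv_cancel₀ (by positivity), C_1]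
  rw [legendrePoly, ← mul_assoc, h, one_mul]

theorem derivative_recurrence (n : ℕ) :
    ((n : ℝ[X]) + 2) * derivative (legendrePoly (n + 2))
      = (2 * (n : ℝ[X]) + 3) * (legendrePoly (n + 1) + X * derivative (legendrePoly (n + 1)))
        - ((n : ℝ[X]) + 1) * derivative (legendrePoly n) := by
  have h := congrArg derivative (recurrence n)
  simp only [derivative_mul, derivative_add, derivative_sub, derivative_natCast, derivative_ofNat,
    derivative_one, derivative_X, zero_mul, mul_zero, add_zero, zero_add, mul_one] at h
  linear_combination h

/- Each identity feeds the induction step of the other: the second one at `n + 1` comes from the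
first one at `n` via the differentiated recurrence. -/
theorem X_mul_derivative_succ_and_derivative_succ (n : ℕ) :
    X * derivative (legendrePoly (n + 1))
        = derivative (legendrePoly n) + ((n : ℝ[X]) + 1) * legendrePoly (n + 1) ∧
      derivative (legendrePoly (n + 1))
        = X * derivative (legendrePoly n) + ((n : ℝ[X]) + 1) * legendrePoly n := by
  induction n with
  | zero => simp [legendrePoly]
  | succ n ih =>
    obtain ⟨hX_mul, hderiv⟩ := ih
    have hderiv_succ : derivative (legendrePoly (n + 2))
        = X * derivative (legendrePoly (n + 1)) + ((n : ℝ[X]) + 2) * legendrePoly (n + 1) := by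
      refine mul_left_cancel₀ (show ((n : ℝ[X]) + 2) ≠ 0 by exact_mod_cast (n + 1).succ_ne_zero) ?_
      linear_combination derivative_recurrence n + ((n : ℝ[X]) + 1) * hX_mul
    push_cast
    constructor
    · linear_combination X * hderiv_succ + X * hX_mul - hderiv - recurrence n
    · linear_combination hderiv_succ

theorem derivative_add_two (n : ℕ) :
    derivative (legendrePoly (n + 2))
      = derivative (legendrePoly n) + (2 * (n : ℝ[X]) + 3) * legendrePoly (n + 1) := by
  obtain ⟨hX_mul, -⟩ := X_mul_derivative_succ_and_derivative_succ n
  obtain ⟨-, hderiv⟩ := X_mul_derivative_succ_and_derivative_succ (n + 1)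
  push_cast at hderiv
  linear_combination hderiv + hX_mul

end legendrePoly

section SubRpow

variable {x b : ℝ}

theorem intervalIntegrable_sub_rpow {β : ℝ} (hβ : -1 < β) :
    IntervalIntegrable (fun s => (s - x) ^ β) volume x b := by
  simpa using (intervalIntegrable_rpow' (a := 0) (b := b - x) hβ).comp_sub_right x

theorem intervalIntegrable_sub_rpow_mul {β : ℝ} (hβ : -1 < β) {g : ℝ → ℝ} (hg : Continuous g) :
    IntervalIntegrable (fun s => (s - x) ^ β * g s) volume x b :=
  (intervalIntegrable_sub_rpow hβ).mul_continuousOn hg.continuousOn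

theorem integral_sub_rpow_mul_of_hasDerivAt {α : ℝ} (hα : 0 < α) {F f : ℝ → ℝ}
    (hF : ∀ s, HasDerivAt F (f s) s) (hf : Continuous f) (hFb : F b = 0) :
    ∫ s in x..b, (s - x) ^ α * f s = -(α * ∫ s in x..b, (s - x) ^ (α - 1) * F s) := by
  have hu : ∀ s ∈ Set.Ioo (min x b) (max x b),
      HasDerivAt (fun s => (s - x) ^ α) (α * (s - x) ^ (α - 1)) s := by
    intro s hs
    have hsx : s - x ≠ 0 := sub_ne_zero.2 fun h => Set.left_notMem_uIoo (h ▸ hs : x ∈ Set.uIoo x b)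
    simpa using ((hasDerivAt_id s).sub_const x).rpow_const (Or.inl hsx)
  have hu_cont : ContinuousOn (fun s => (s - x) ^ α) (Set.uIcc x b) :=
    (continuous_id.sub continuous_const).continuousOn.rpow_const fun _ _ => Or.inr hα.le
  rw [integral_mul_deriv_eq_deriv_mul_of_hasDerivAt hu_cont
    (fun s _ => (hF s).continuousAt.continuousWithinAt) hu (fun s _ => hF s)
    ((intervalIntegrable_sub_rpow (by linarith)).const_mul α)
    (hf.intervalIntegrable x b)]
  simp [hFb, Real.zero_rpow hα.ne', mul_assoc, intervalIntegral.integral_const_mul]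

end SubRpow

/-- The paper's `L̂^α_{R,j}(x)` is `rightRiemannLiouville hα x (legendrePoly j)`. -/
noncomputable def rightRiemannLiouville {α : ℝ} (hα : 0 < α) (x : ℝ) : ℝ[X] →ₗ[ℝ] ℝ where
  toFun p := (1 / Real.Gamma α) * ∫ s in x..1, (s - x) ^ (α - 1) * p.eval s
  map_add' p q := by
    have hint := fun r : ℝ[X] => intervalIntegrable_sub_rpow_mul (x := x) (b := 1)
      (show -1 < α - 1 by linarith) r.continuous
    simp only [eval_add, mul_add, integral_add (hint p) (hint q)]
  map_smul' c p := by
    simp only [eval_smul, smul_eq_mul, mul_left_comm _ c, intervalIntegral.integral_const_mul,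
      RingHom.id_apply]

theorem rightRiemannLiouville_apply {α : ℝ} (hα : 0 < α) (x : ℝ) (p : ℝ[X]) :
    rightRiemannLiouville hα x p = (1 / Real.Gamma α) * ∫ s in x..1, (s - x) ^ (α - 1) * p.eval s :=
  rfl

theorem rightRiemannLiouville_X_sub_C_mul_derivative {α : ℝ} (hα : 0 < α) {x : ℝ} (hx : x ≤ 1)
    (p : ℝ[X]) (hp : p.eval 1 = 0) :
    rightRiemannLiouville hα x ((X - C x) * derivative p) = -(α * rightRiemannLiouville hα x p) := by
  have hkernel : ∀ s ∈ Set.uIcc x 1,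
      (s - x) ^ (α - 1) * ((X - C x) * derivative p).eval s = (s - x) ^ α * (derivative p).eval s := by
    intro s hs
    rw [Set.uIcc_of_le hx] at hs
    rw [eval_mul, eval_sub, eval_X, eval_C, ← mul_assoc,
      ← Real.rpow_add_one' (sub_nonneg.2 hs.1) (by linarith), sub_add_cancel]
  rw [rightRiemannLiouville_apply, rightRiemannLiouville_apply, integral_congr hkernel,
    integral_sub_rpow_mul_of_hasDerivAt hα p.hasDerivAt (derivative p).continuous hp]
  ring

theorem rightRiemannLiouville_legendrePoly_recurrence {α : ℝ} (hα : 0 < α) {x : ℝ} (hx : x ≤ 1)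
    (n : ℕ) :
    ((n : ℝ) + 2 + α) * rightRiemannLiouville hα x (legendrePoly (n + 2))
      = (2 * (n : ℝ) + 3) * x * rightRiemannLiouville hα x (legendrePoly (n + 1))
        - ((n : ℝ) + 1 - α) * rightRiemannLiouville hα x (legendrePoly n) := by
  have hpoly : (X - C x) * derivative (legendrePoly (n + 2) - legendrePoly n)
      = ((n : ℝ) + 2) • legendrePoly (n + 2) + ((n : ℝ) + 1) • legendrePoly n
        - ((2 * (n : ℝ) + 3) * x) • legendrePoly (n + 1) := by
    simp only [derivative_sub, legendrePoly.derivative_add_two, smul_eq_C_mul, map_add, map_mul,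
      map_natCast, map_ofNat, map_one]
    linear_combination -legendrePoly.recurrence n
  have hIBP := rightRiemannLiouville_X_sub_C_mul_derivative hα hx
    (legendrePoly (n + 2) - legendrePoly n) (by simp [legendrePoly.eval_one])
  rw [hpoly] at hIBP
  simp only [map_sub, map_add, map_smul, smul_eq_mul] at hIBP
  linear_combination hIBP

/-- Three-term recurrence for the right fractional integrals of the Legendre polynomials:
`(j+1+α) L̂^α_{R,j+1}(x) = (2j+1) x L̂^α_{R,j}(x) − (j−α) L̂^α_{R,j−1}(x)` for `j ≥ 1`. -/
theorem legendre_right_frac_integral_rec (α : ℝ) (hα : 0 < α) (j : ℕ) (hj : 1 ≤ j)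
    (x : ℝ) (hx : x ∈ Set.Ico (-1 : ℝ) 1) :
    ((j : ℝ) + 1 + α) *
        ((1 / Real.Gamma α) * ∫ s in x..(1 : ℝ), (s - x) ^ (α - 1) * legendreP (j + 1) s)
      = (2 * (j : ℝ) + 1) * x *
          ((1 / Real.Gamma α) * ∫ s in x..(1 : ℝ), (s - x) ^ (α - 1) * legendreP j s)
        - ((j : ℝ) - α) *
          ((1 / Real.Gamma α) * ∫ s in x..(1 : ℝ), (s - x) ^ (α - 1) * legendreP (j - 1) s) := by
  obtain ⟨n, rfl⟩ := Nat.exists_eq_add_of_le' hj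
  have h := rightRiemannLiouville_legendrePoly_recurrence hα hx.2.le n
  simp only [rightRiemannLiouville_apply, legendrePoly.eval_eq_legendreP] at h
  simp only [Nat.add_sub_cancel]
  push_cast
  linear_combination h
end
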